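/- Let N, n ≥ 1, let f : ℝ^N → ℝ and h : ℝ^N → ℝ^n be differentiable, let x ∈ ℝ^N, write Dh(x) for the n×N Jacobian of h, assume Dh(x)·Dh(x)ᵀ is invertible, and set H(x) = Dh(x)ᵀ·(Dh(x)·Dh(x)ᵀ)⁻¹·Dh(x). Let I be a finite index set, let g_i : ℝ^N → ℝ (i ∈ I) be differentiable, and suppose there are α > 0 and α_i ≥ 0 (i ∈ I) with α + Σ_{i∈I} α_i = 1 such that Σ_{i∈I} α_i·(−Dh(x)ᵀ·h(x) − (I − H(x))·∇g_i(x)) + α·(−Dh(x)ᵀ·h(x) − (I − H(x))·∇f(x)) = 0. Then h(x) = 0 and there exists λ ∈ ℝ^n such that ∇f(x) + Σ_{i∈I} μ_i·∇g_i(x) + Dh(x)ᵀ·λ = 0 with μ_i = α_i/α ≥ 0 for all i ∈ I. (Converse direction of Theorem 6.1: a Filippov equilibrium of Ψ on the discontinuity set with positive weight α on the objective term solves the KKT system with nonnegative multipliers.) -/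

import Mathlib

open scoped RealInnerProductSpace Matrix

/-!
Write `D = Dh(x)` and `v = α ∇f(x) + ∑ᵢ αᵢ ∇gᵢ(x)`. Since the weights sum to one, the equilibrium
condition reads `Dᵀ h(x) + (I - H) v = 0`. As `D (I - H) = 0`, applying `D` leaves
`D Dᵀ h(x) = 0`, so `h(x) = 0`; then `(I - H) v = 0` puts `v` in the range of `Dᵀ`, and dividing
by `α > 0` gives the KKT system.
-/

theorem sum_smul_neg_sub_add_smul_neg_sub {ι R M P : Type*} [Ring R] [AddCommGroup M]
    [Module R M] [AddCommGroup P] [Module R P] (s : Finset ι) (L : M →ₗ[R] P) (a : P)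
    (β : ι → R) (w : ι → M) (α : R) (u : M) :
    ∑ i ∈ s, β i • (-a - L (w i)) + α • (-a - L u)
      = -((α + ∑ i ∈ s, β i) • a + L (∑ i ∈ s, β i • w i + α • u)) := by
  simp only [smul_sub, smul_neg, Finset.sum_sub_distrib, Finset.sum_neg_distrib,
    ← Finset.sum_smul, add_smul, map_add, map_sum, map_smul]
  abel

namespace Matrix

variable {m n R : Type*} [Fintype m] [Fintype n] [DecidableEq m] [DecidableEq n] [CommRing R]

/-- For real `D` of full row rank, the orthogonal projection onto the row space of `D`
(the paper's `H(x)` for `D = Dh(x)`). -/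
noncomputable def rowSpaceProj (D : Matrix m n R) : Matrix n n R := Dᵀ * (D * Dᵀ)⁻¹ * D

variable {D : Matrix m n R}

theorem mul_one_sub_rowSpaceProj (hD : IsUnit (D * Dᵀ).det) : D * (1 - D.rowSpaceProj) = 0 := by
  rw [rowSpaceProj, Matrix.mul_sub, Matrix.mul_one, ← Matrix.mul_assoc, ← Matrix.mul_assoc,
    mul_nonsing_inv _ hD, Matrix.one_mul, sub_self]

theorem transpose_mulVec_add_one_sub_rowSpaceProj_mulVec_eq_zero_iff
    (hD : IsUnit (D * Dᵀ).det) {a : m → R} {v : n → R} :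
    Dᵀ *ᵥ a + (1 - D.rowSpaceProj) *ᵥ v = 0 ↔ a = 0 ∧ (1 - D.rowSpaceProj) *ᵥ v = 0 := by
  refine ⟨fun h => ?_, fun ⟨ha, hv⟩ => by rw [ha, hv, mulVec_zero, add_zero]⟩
  have hDDa : (D * Dᵀ) *ᵥ a = 0 := by
    simpa only [mulVec_add, mulVec_mulVec, mul_one_sub_rowSpaceProj hD, zero_mulVec, add_zero,
      mulVec_zero] using congrArg (D *ᵥ ·) h
  have ha : a = 0 := by
    simpa only [mulVec_mulVec, nonsing_inv_mul _ hD, one_mulVec, mulVec_zero]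
      using congrArg ((D * Dᵀ)⁻¹ *ᵥ ·) hDDa
  rw [ha, mulVec_zero, zero_add] at h
  exact ⟨ha, h⟩

theorem exists_transpose_mulVec_eq_of_one_sub_rowSpaceProj_mulVec_eq_zero {v : n → R}
    (hv : (1 - D.rowSpaceProj) *ᵥ v = 0) : ∃ lam : m → R, Dᵀ *ᵥ lam = v := by
  refine ⟨(D * Dᵀ)⁻¹ *ᵥ (D *ᵥ v), ?_⟩
  rw [sub_mulVec, one_mulVec, sub_eq_zero] at hv
  rw [mulVec_mulVec, mulVec_mulVec]
  exact hv.symm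

end Matrix

theorem stmt_14_general (N n : ℕ)
    (f : EuclideanSpace ℝ (Fin N) → ℝ)
    (h : EuclideanSpace ℝ (Fin N) → EuclideanSpace ℝ (Fin n))
    (x : EuclideanSpace ℝ (Fin N))
    (Dh : EuclideanSpace ℝ (Fin N) → Matrix (Fin n) (Fin N) ℝ)
    (hinv : IsUnit (Dh x * (Dh x)ᵀ).det)
    (H : Matrix (Fin N) (Fin N) ℝ)
    (hH : H = (Dh x)ᵀ * (Dh x * (Dh x)ᵀ)⁻¹ * Dh x)
    (ι : Type*) [Fintype ι]
    (g : ι → (EuclideanSpace ℝ (Fin N) → ℝ))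
    (α : ℝ) (β : ι → ℝ)
    (hα : 0 < α) (hβ : ∀ i, 0 ≤ β i) (hsum : α + ∑ i, β i = 1)
    (hzero : (∑ i, β i • (-((Dh x)ᵀ *ᵥ (h x : EuclideanSpace ℝ (Fin n)))
        - (1 - H) *ᵥ (gradient (g i) x : EuclideanSpace ℝ (Fin N))))
      + α • (-((Dh x)ᵀ *ᵥ (h x : EuclideanSpace ℝ (Fin n)))
        - (1 - H) *ᵥ (gradient f x : EuclideanSpace ℝ (Fin N))) = 0) :
    h x = 0 ∧ (∀ i, 0 ≤ β i / α) ∧ ∃ lam : Fin n → ℝ,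
      (fun j => gradient f x j)
        + (∑ i, (β i / α) • (fun j => gradient (g i) x j))
        + (Dh x)ᵀ *ᵥ lam = 0 := by
  obtain rfl : H = (Dh x).rowSpaceProj := hH
  set u : Fin N → ℝ := WithLp.ofLp (gradient f x)
  set w : ι → Fin N → ℝ := fun i => WithLp.ofLp (gradient (g i) x)
  set v := ∑ i, β i • w i + α • u
  have hdecomp : (Dh x)ᵀ *ᵥ h x + (1 - (Dh x).rowSpaceProj) *ᵥ v = 0 := by
    have hcomb := sum_smul_neg_sub_add_smul_neg_sub Finset.univ
      (1 - (Dh x).rowSpaceProj).mulVecLin ((Dh x)ᵀ *ᵥ h x) β w α u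
    rw [hsum, one_smul] at hcomb
    exact neg_eq_zero.1 (hcomb.symm.trans hzero)
  obtain ⟨hx0, hv0⟩ :=
    (Matrix.transpose_mulVec_add_one_sub_rowSpaceProj_mulVec_eq_zero_iff hinv).1 hdecomp
  obtain ⟨lam, hlam⟩ := Matrix.exists_transpose_mulVec_eq_of_one_sub_rowSpaceProj_mulVec_eq_zero hv0
  refine ⟨(WithLp.ofLp_eq_zero 2).1 hx0, fun i => div_nonneg (hβ i) hα.le, -(α⁻¹ • lam), ?_⟩
  change u + ∑ i, (β i / α) • w i + _ = 0
  rw [Matrix.mulVec_neg, Matrix.mulVec_smul, hlam, smul_add, Finset.smul_sum]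
  simp only [smul_smul, inv_mul_cancel₀ hα.ne', one_smul, div_eq_inv_mul]
  abel

/-- Converse direction of Theorem 6.1: if a convex combination (with positive
weight `α` on the objective term) of the Filippov generators
`-Dh(x)ᵀh(x) - (I-H(x))∇gᵢ(x)` and `-Dh(x)ᵀh(x) - (I-H(x))∇f(x)` vanishes,
then `h(x) = 0` and the KKT system holds with multipliers `μᵢ = αᵢ/α ≥ 0`. -/
theorem stmt_14 (N n : ℕ) (hN : 1 ≤ N) (hn : 1 ≤ n)
    (f : EuclideanSpace ℝ (Fin N) → ℝ)
    (h : EuclideanSpace ℝ (Fin N) → EuclideanSpace ℝ (Fin n))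
    (hf : Differentiable ℝ f) (hh : Differentiable ℝ h)
    (x : EuclideanSpace ℝ (Fin N))
    (Dh : EuclideanSpace ℝ (Fin N) → Matrix (Fin n) (Fin N) ℝ)
    (hDh : ∀ y j i, Dh y j i = gradient (fun z => h z j) y i)
    (hinv : IsUnit (Dh x * (Dh x)ᵀ).det)
    (H : Matrix (Fin N) (Fin N) ℝ)
    (hH : H = (Dh x)ᵀ * (Dh x * (Dh x)ᵀ)⁻¹ * Dh x)
    (ι : Type*) [Fintype ι]
    (g : ι → (EuclideanSpace ℝ (Fin N) → ℝ))
    (hgdiff : ∀ i, Differentiable ℝ (g i))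
    (α : ℝ) (β : ι → ℝ)
    (hα : 0 < α) (hβ : ∀ i, 0 ≤ β i) (hsum : α + ∑ i, β i = 1)
    (hzero : (∑ i, β i • (-((Dh x)ᵀ *ᵥ (h x : EuclideanSpace ℝ (Fin n)))
        - (1 - H) *ᵥ (gradient (g i) x : EuclideanSpace ℝ (Fin N))))
      + α • (-((Dh x)ᵀ *ᵥ (h x : EuclideanSpace ℝ (Fin n)))
        - (1 - H) *ᵥ (gradient f x : EuclideanSpace ℝ (Fin N))) = 0) :
    h x = 0 ∧ (∀ i, 0 ≤ β i / α) ∧ ∃ lam : Fin n → ℝ,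
      (fun j => gradient f x j)
        + (∑ i, (β i / α) • (fun j => gradient (g i) x j))
        + (Dh x)ᵀ *ᵥ lam = 0 :=
  stmt_14_general N n f h x Dh hinv H hH ι g α β hα hβ hsum hzero
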